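/- arXiv:2403.09633 — 9 statements merged into one kernel-verified Lean document; each statement's English description precedes it below -/
import Mathlib

section
/- For any constants c₁ ≠ 0, c₂, k ∈ ℝ, the function p(x₁,x₂) = 2 tanh²(c₁ x₁ - k x₂/c₁ + c₂) - 1 satisfies the PDE ((1 - p²) ∂₁∂₂p + p (∂₁p)(∂₂p)) / (1 - p²)² = k at every point where |p| < 1. -/
/-!
Along the phase `u = c₁ x₁ - (k / c₁) x₂ + c₂` the function is a plane wave `p = g u` with
profile `g = 2 tanh² - 1`, so `∂₁p = c₁ g'`, `∂₂p = -(k / c₁) g'` and `∂₁∂₂p = -k g''`.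
The left-hand side therefore equals `-k ((1 - g²) g'' + g g'²) / (1 - g²)²`, and the profile
satisfies the ODE `(1 - g²) g'' + g g'² = -(1 - g²)²`, a polynomial identity in `tanh u`
once `tanh' = 1 - tanh²` is used.
-/

open Real

theorem Real.hasDerivAt_tanh (x : ℝ) : HasDerivAt tanh (1 - tanh x ^ 2) x := by
  have hcosh : cosh x ≠ 0 := (cosh_pos x).ne'
  have h := (hasDerivAt_sinh x).div (hasDerivAt_cosh x) hcosh
  rw [show sinh / cosh = tanh from funext fun y => (tanh_eq_sinh_div_cosh y).symm] at h
  refine h.congr_deriv ?_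
  rw [tanh_eq_sinh_div_cosh]
  field_simp

section PlaneWave

variable {f f' f'' : ℝ → ℝ} {a b c : ℝ}

theorem hasDerivAt_planeWave_fst (hf : ∀ u, HasDerivAt f (f' u) u) (s t : ℝ) :
    HasDerivAt (fun s => f (a * s + b * t + c)) (a * f' (a * s + b * t + c)) s := by
  have hphase : HasDerivAt (fun s => a * s + b * t + c) a s := by
    simpa using (((hasDerivAt_id s).const_mul a).add_const (b * t)).add_const c
  exact ((hf _).comp s hphase).congr_deriv (mul_comm _ _)

theorem hasDerivAt_planeWave_snd (hf : ∀ u, HasDerivAt f (f' u) u) (s t : ℝ) :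
    HasDerivAt (fun t => f (a * s + b * t + c)) (b * f' (a * s + b * t + c)) t := by
  have hphase : HasDerivAt (fun t => a * s + b * t + c) b t := by
    simpa using (((hasDerivAt_id t).const_mul b).const_add (a * s)).add_const c
  exact ((hf _).comp t hphase).congr_deriv (mul_comm _ _)

theorem deriv_deriv_planeWave (hf : ∀ u, HasDerivAt f (f' u) u)
    (hf' : ∀ u, HasDerivAt f' (f'' u) u) (s t : ℝ) :
    deriv (fun s => deriv (fun t => f (a * s + b * t + c)) t) s =
      a * b * f'' (a * s + b * t + c) := by
  simp only [(hasDerivAt_planeWave_snd hf _ t).deriv]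
  rw [((hasDerivAt_planeWave_fst hf' s t).const_mul b).deriv]
  ring

end PlaneWave

theorem hasDerivAt_tanhProfile (u : ℝ) :
    HasDerivAt (fun u => 2 * tanh u ^ 2 - 1) (4 * tanh u * (1 - tanh u ^ 2)) u := by
  refine ((((hasDerivAt_tanh u).fun_pow 2).const_mul 2).sub_const 1).congr_deriv ?_
  push_cast
  ring

theorem hasDerivAt_tanhProfile_deriv (u : ℝ) :
    HasDerivAt (fun u => 4 * tanh u * (1 - tanh u ^ 2))
      (4 * (1 - tanh u ^ 2) * (1 - 3 * tanh u ^ 2)) u := by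
  have h := hasDerivAt_tanh u
  refine ((h.const_mul 4).mul ((h.fun_pow 2).const_sub 1)).congr_deriv ?_
  push_cast
  ring

theorem tanhProfile_ode (T : ℝ) :
    (1 - (2 * T ^ 2 - 1) ^ 2) * (4 * (1 - T ^ 2) * (1 - 3 * T ^ 2)) +
        (2 * T ^ 2 - 1) * (4 * T * (1 - T ^ 2)) ^ 2 =
      -(1 - (2 * T ^ 2 - 1) ^ 2) ^ 2 := by
  ring

theorem stmt_3 (c₁ c₂ k : ℝ) (hc₁ : c₁ ≠ 0)
    (p : ℝ → ℝ → ℝ)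
    (hp : p = fun x₁ x₂ => 2 * Real.tanh (c₁ * x₁ - k * x₂ / c₁ + c₂) ^ 2 - 1) :
    ∀ x₁ x₂ : ℝ, |p x₁ x₂| < 1 →
      ((1 - (p x₁ x₂) ^ 2) * deriv (fun s => deriv (fun t => p s t) x₂) x₁ +
          p x₁ x₂ * deriv (fun s => p s x₂) x₁ * deriv (fun t => p x₁ t) x₂) /
        (1 - (p x₁ x₂) ^ 2) ^ 2 = k := by
  subst hp
  intro x₁ x₂ hlt
  have hphase : ∀ s t, c₁ * s - k * t / c₁ + c₂ = c₁ * s + -k / c₁ * t + c₂ := by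
    intros; ring
  simp only [hphase] at hlt ⊢
  rw [deriv_deriv_planeWave hasDerivAt_tanhProfile hasDerivAt_tanhProfile_deriv,
    (hasDerivAt_planeWave_fst hasDerivAt_tanhProfile x₁ x₂).deriv,
    (hasDerivAt_planeWave_snd hasDerivAt_tanhProfile x₁ x₂).deriv]
  set T := tanh (c₁ * x₁ + -k / c₁ * x₂ + c₂)
  have hne : 1 - (2 * T ^ 2 - 1) ^ 2 ≠ 0 :=
    sub_ne_zero.mpr ((sq_lt_one_iff_abs_lt_one _).mpr hlt).ne'
  have hab : c₁ * (-k / c₁) = -k := by field_simp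
  calc _ = c₁ * (-k / c₁) * ((1 - (2 * T ^ 2 - 1) ^ 2) * (4 * (1 - T ^ 2) * (1 - 3 * T ^ 2)) +
          (2 * T ^ 2 - 1) * (4 * T * (1 - T ^ 2)) ^ 2) / (1 - (2 * T ^ 2 - 1) ^ 2) ^ 2 := by
        ring
    _ = k := by
        rw [tanhProfile_ode, hab]
        field_simp
end

section
/- Let l, m ∈ ℝ with l > 0 and |m| < 4l. Then 0 ≤ 3m²/(8l) ≤ (3/2)√(4l² + 2m²) - 3l < (8l² + m²)/(4l) < 6l. -/
theorem stmt_8 (l m : ℝ) (hl : 0 < l) (hm : |m| < 4 * l) :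
    0 ≤ 3 * m ^ 2 / (8 * l) ∧
    3 * m ^ 2 / (8 * l) ≤ (3 / 2) * Real.sqrt (4 * l ^ 2 + 2 * m ^ 2) - 3 * l ∧
    (3 / 2) * Real.sqrt (4 * l ^ 2 + 2 * m ^ 2) - 3 * l < (8 * l ^ 2 + m ^ 2) / (4 * l) ∧
    (8 * l ^ 2 + m ^ 2) / (4 * l) < 6 * l := by
  have hm2 : m ^ 2 < 16 * l ^ 2 := by
    have := sq_abs m
    nlinarith [abs_nonneg m]
  set s := Real.sqrt (4 * l ^ 2 + 2 * m ^ 2) with hs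
  have hs0 : 0 ≤ s := Real.sqrt_nonneg _
  have hs2 : s ^ 2 = 4 * l ^ 2 + 2 * m ^ 2 := by
    rw [hs, Real.sq_sqrt]; nlinarith
  refine ⟨by positivity, ?_, ?_, ?_⟩
  · have key : (8 * l ^ 2 + m ^ 2) ^ 2 ≤ (4 * l * s) ^ 2 := by
      nlinarith [mul_nonneg (sq_nonneg m) (sub_nonneg.2 hm2.le)]
    have h2 : 8 * l ^ 2 + m ^ 2 ≤ 4 * l * s := by
      have := Real.sqrt_le_sqrt key
      rwa [Real.sqrt_sq (by positivity), Real.sqrt_sq (by positivity)] at this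
    rw [div_le_iff₀ (by positivity)]
    nlinarith
  · rw [lt_div_iff₀ (by positivity)]
    nlinarith [sq_nonneg (m ^ 2 - 16 * l ^ 2), mul_pos hl hl, sq_nonneg (s - 2 * l),
      mul_nonneg hs0 hl.le]
  · rw [div_lt_iff₀ (by positivity)]; nlinarith
end

section
/- Let l, m ∈ ℝ with l > 0 and 0 ≤ m < 4l. Then (3/2)√(4l² + 2m²) - 3l ≤ 3m(m + 2l)/(8l + m) < (8l² + m²)/(4l). -/
theorem stmt_9 (l m : ℝ) (hl : 0 < l) (hm0 : 0 ≤ m) (hm : m < 4 * l) :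
    (3 / 2) * Real.sqrt (4 * l ^ 2 + 2 * m ^ 2) - 3 * l ≤ 3 * m * (m + 2 * l) / (8 * l + m) ∧
    3 * m * (m + 2 * l) / (8 * l + m) < (8 * l ^ 2 + m ^ 2) / (4 * l) := by
  have hd : (0:ℝ) < 8 * l + m := by linarith
  constructor
  · set s := Real.sqrt (4 * l ^ 2 + 2 * m ^ 2) with hsdef
    have hs0 : 0 ≤ s := Real.sqrt_nonneg _
    have hs : s ^ 2 = 4 * l ^ 2 + 2 * m ^ 2 := by
      rw [hsdef, Real.sq_sqrt]; nlinarith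
    have key : s * (8 * l + m) ≤ 2 * (m ^ 2 + 3 * l * m + 8 * l ^ 2) := by
      have hsq : (s * (8 * l + m)) ^ 2 ≤ (2 * (m ^ 2 + 3 * l * m + 8 * l ^ 2)) ^ 2 := by
        nlinarith [mul_nonneg hm0 (mul_nonneg (sq_nonneg (4 * l - m)) (by linarith : (0:ℝ) ≤ m + 4 * l))]
      have h := Real.sqrt_le_sqrt hsq
      rwa [Real.sqrt_sq (by positivity), Real.sqrt_sq (by positivity)] at h
    rw [sub_le_iff_le_add, div_add' _ _ _ hd.ne', le_div_iff₀ hd]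
    nlinarith
  · rw [div_lt_div_iff₀ hd (by linarith : (0:ℝ) < 4 * l)]
    nlinarith [mul_pos (pow_pos (show (0:ℝ) < 4 * l - m by linarith) 2)
      (show (0:ℝ) < m + 4 * l by linarith)]
end

section
/- Let l, m, n ∈ ℝ satisfy (3/2)√(4l² + 2m²) - 3l < n < 6l. Then l > 0, 3m² < 8ln and 2|m| < 2l + n. -/
theorem stmt_10 (l m n : ℝ)
    (h1 : (3 / 2) * Real.sqrt (4 * l ^ 2 + 2 * m ^ 2) - 3 * l < n) (h2 : n < 6 * l) :
    0 < l ∧ 3 * m ^ 2 < 8 * l * n ∧ 2 * |m| < 2 * l + n := by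
  set s := Real.sqrt (4 * l ^ 2 + 2 * m ^ 2) with hs
  have hs0 : 0 ≤ s := Real.sqrt_nonneg _
  have hs2 : s ^ 2 = 4 * l ^ 2 + 2 * m ^ 2 := Real.sq_sqrt (by positivity)
  have habs : 2 * |l| ≤ s := by
    rw [hs]
    rw [show (2 : ℝ) * |l| = Real.sqrt ((2 * |l|) ^ 2) from
      (Real.sqrt_sq (by positivity)).symm]
    apply Real.sqrt_le_sqrt
    nlinarith [sq_abs l, sq_nonneg m]
  have hl : 0 < l := by
    rcases abs_cases l with ⟨he, _⟩ | ⟨he, hneg⟩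
    · nlinarith
    · nlinarith
  have hn : 0 < n := by
    rw [abs_of_pos hl] at habs
    nlinarith
  have hpos : 0 < n + 3 * l := by linarith
  have hsq : 9 * l ^ 2 + (9 / 2) * m ^ 2 < (n + 3 * l) ^ 2 := by nlinarith
  refine ⟨hl, ?_, ?_⟩
  · nlinarith
  · nlinarith [sq_abs m, abs_nonneg m, sq_nonneg (2 * l - n / 3)]
end

section
/- Let l, m, n ∈ ℝ. The Hessian of A(y₁,y₂) = l(y₁⁴ + y₂⁴) + m(y₁³y₂ + y₁y₂³) + n y₁²y₂² is positive definite at every (y₁,y₂) ≠ (0,0) if and only if (3/2)√(4l² + 2m²) - 3l < n < 6l. -/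
/-!
Substituting y₁ = x + y, y₂ = x - y turns A into the even quartic
a x⁴ + c x²y² + b y⁴ with a = 2l + 2m + n, b = 2l - 2m + n, c = 12l - 2n, and the two Hessians
are congruent through the constant Jacobian of the substitution. For the even quartic the Hessian
determinant is 12 times
  2ac x⁴ + (12ab - c²) x²y² + 2bc y⁴ = 2c (√a x² - √b y²)² + (6√(ab) - c)(2√(ab) + c) x²y²,
so its Hessian is positive definite away from the origin iff a, b, c > 0 and c < 6√(ab).
In terms of l, m, n the last condition is 2n² + 12ln - 9m² > 0, which is the stated bound.
-/

noncomputable def pd1 (f : ℝ → ℝ → ℝ) : ℝ → ℝ → ℝ := fun x y => deriv (fun t => f t y) x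
noncomputable def pd2 (f : ℝ → ℝ → ℝ) : ℝ → ℝ → ℝ := fun x y => deriv (fun t => f x t) y

open Matrix

noncomputable def hessianMatrix (f : ℝ → ℝ → ℝ) (x y : ℝ) : Matrix (Fin 2) (Fin 2) ℝ :=
  !![pd1 (pd1 f) x y, pd1 (pd2 f) x y; pd2 (pd1 f) x y, pd2 (pd2 f) x y]

def binaryQuartic (a₀ a₁ a₂ a₃ a₄ x y : ℝ) : ℝ :=
  a₀ * x ^ 4 + a₁ * x ^ 3 * y + a₂ * x ^ 2 * y ^ 2 + a₃ * x * y ^ 3 + a₄ * y ^ 4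

lemma hessianMatrix_binaryQuartic (a₀ a₁ a₂ a₃ a₄ x y : ℝ) :
    hessianMatrix (binaryQuartic a₀ a₁ a₂ a₃ a₄) x y =
      !![12 * a₀ * x ^ 2 + 6 * a₁ * x * y + 2 * a₂ * y ^ 2,
          3 * a₁ * x ^ 2 + 4 * a₂ * x * y + 3 * a₃ * y ^ 2;
        3 * a₁ * x ^ 2 + 4 * a₂ * x * y + 3 * a₃ * y ^ 2,
          2 * a₂ * x ^ 2 + 6 * a₃ * x * y + 12 * a₄ * y ^ 2] := by
  ext i j
  fin_cases i <;> fin_cases j <;>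
    simp (disch := fun_prop) only [hessianMatrix, pd1, pd2, binaryQuartic, deriv_fun_add,
      deriv_fun_mul, deriv_const', deriv_fun_pow, deriv_id'', deriv_const_mul_id', of_apply,
      cons_val', cons_val_zero, cons_val_one, cons_val_fin_one, Fin.isValue, Fin.zero_eta,
      Fin.mk_one, Nat.cast_ofNat, Nat.add_one_sub_one] <;> ring

lemma quadratic_form_pos {a b c x y : ℝ} (ha : 0 < a) (hdet : 0 < a * c - b ^ 2)
    (hxy : (x, y) ≠ (0, 0)) : 0 < a * x ^ 2 + 2 * b * x * y + c * y ^ 2 := by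
  rcases eq_or_ne y 0 with rfl | hy
  · have hx : x ≠ 0 := by simpa using hxy
    simpa using mul_pos ha (by positivity : 0 < x ^ 2)
  · have hsq : a * (a * x ^ 2 + 2 * b * x * y + c * y ^ 2) =
        (a * x + b * y) ^ 2 + (a * c - b ^ 2) * y ^ 2 := by
      ring
    have : 0 < a * (a * x ^ 2 + 2 * b * x * y + c * y ^ 2) := by
      rw [hsq]
      have := mul_pos hdet (by positivity : 0 < y ^ 2)
      positivity
    exact pos_of_mul_pos_right this ha.le

lemma posDef_fin_two_iff {a b c : ℝ} : (!![a, b; b, c]).PosDef ↔ 0 < a ∧ 0 < a * c - b ^ 2 := by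
  refine ⟨fun h => ⟨by simpa using h.diag_pos (i := 0),
      by simpa [det_fin_two, sq] using h.det_pos⟩,
    fun ⟨ha, hdet⟩ => .of_dotProduct_mulVec_pos ?_ fun v hv => ?_⟩
  · ext i j; fin_cases i <;> fin_cases j <;> rfl
  · have hv' : (v 0, v 1) ≠ (0, 0) := fun h => hv (by ext i; fin_cases i <;> simp_all)
    have hform :
        star v ⬝ᵥ (!![a, b; b, c] *ᵥ v) = a * v 0 ^ 2 + 2 * b * v 0 * v 1 + c * v 1 ^ 2 := by
      simp only [dotProduct, Pi.star_apply, star_trivial, mulVec, of_apply, cons_val',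
        cons_val_fin_one, Fin.sum_univ_two, Fin.isValue, cons_val_zero, cons_val_one]
      ring
    exact hform ▸ quadratic_form_pos ha hdet hv'

lemma evenQuartic_det_eq (a b c x y : ℝ) (ha : 0 ≤ a) (hb : 0 ≤ b) :
    2 * a * c * x ^ 4 + (12 * a * b - c ^ 2) * x ^ 2 * y ^ 2 + 2 * b * c * y ^ 4 =
      2 * c * (√a * x ^ 2 - √b * y ^ 2) ^ 2
        + (6 * (√a * √b) - c) * (2 * (√a * √b) + c) * x ^ 2 * y ^ 2 := by
  linear_combination (-(2 * c * x ^ 4) - 12 * √b ^ 2 * x ^ 2 * y ^ 2) * Real.sq_sqrt ha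
    + (-(2 * c * y ^ 4) - 12 * a * x ^ 2 * y ^ 2) * Real.sq_sqrt hb

lemma posDef_hessianMatrix_evenQuartic_iff (a b c x y : ℝ) :
    (hessianMatrix (binaryQuartic a 0 c 0 b) x y).PosDef ↔
      0 < 12 * a * x ^ 2 + 2 * c * y ^ 2 ∧
        0 < 2 * a * c * x ^ 4 + (12 * a * b - c ^ 2) * x ^ 2 * y ^ 2 + 2 * b * c * y ^ 4 := by
  rw [hessianMatrix_binaryQuartic, posDef_fin_two_iff]
  refine and_congr (by ring_nf) (Iff.trans ?_ (mul_pos_iff_of_pos_left (by norm_num : (0 : ℝ) < 12)))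
  ring_nf

theorem forall_posDef_hessianMatrix_evenQuartic_iff (a b c : ℝ) :
    (∀ x y : ℝ, (x, y) ≠ (0, 0) → (hessianMatrix (binaryQuartic a 0 c 0 b) x y).PosDef) ↔
      0 < a ∧ 0 < b ∧ 0 < c ∧ c ^ 2 < 36 * a * b := by
  simp_rw [posDef_hessianMatrix_evenQuartic_iff]
  constructor
  · intro h
    obtain ⟨ha, hc⟩ : 0 < a ∧ 0 < c := by
      obtain ⟨h₁, h₂⟩ := h 1 0 (by simp)
      norm_num at h₁ h₂
      exact ⟨h₁, by nlinarith⟩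
    have hb : 0 < b := by
      obtain ⟨-, h₂⟩ := h 0 1 (by simp)
      norm_num at h₂
      nlinarith
    refine ⟨ha, hb, hc, ?_⟩
    -- at x² = √b, y² = √a the square in `evenQuartic_det_eq` vanishes
    obtain ⟨-, hD⟩ := h √√b √√a (by simp [Real.sqrt_eq_zero', ha])
    rw [evenQuartic_det_eq _ _ _ _ _ ha.le hb.le, Real.sq_sqrt (Real.sqrt_nonneg b),
      Real.sq_sqrt (Real.sqrt_nonneg a), mul_comm √b √a, sub_self] at hD
    have h6 : c < 6 * (√a * √b) := by
      have : 0 < (6 * (√a * √b) - c) * ((2 * (√a * √b) + c) * (√a * √b)) := by linarith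
      linarith [pos_of_mul_pos_left this (by positivity)]
    calc c ^ 2 < (6 * (√a * √b)) ^ 2 := pow_lt_pow_left₀ h6 hc.le two_ne_zero
      _ = 36 * a * b := by rw [mul_pow, mul_pow, Real.sq_sqrt ha.le, Real.sq_sqrt hb.le]; ring
  · rintro ⟨ha, hb, hc, hcab⟩ x y hxy
    rcases eq_or_ne x 0 with rfl | hx
    · have hy : y ≠ 0 := by simpa using hxy
      norm_num
      constructor <;> positivity
    rcases eq_or_ne y 0 with rfl | hy
    · norm_num
      constructor <;> positivity
    refine ⟨by positivity, ?_⟩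
    have h6 : c < 6 * (√a * √b) := by
      refine lt_of_pow_lt_pow_left₀ 2 (by positivity) ?_
      rw [mul_pow, mul_pow, Real.sq_sqrt ha.le, Real.sq_sqrt hb.le]
      linarith
    rw [evenQuartic_det_eq _ _ _ _ _ ha.le hb.le]
    have : 0 < (6 * (√a * √b) - c) * (2 * (√a * √b) + c) * x ^ 2 * y ^ 2 := by
      have := sub_pos.2 h6
      positivity
    positivity

lemma hessianMatrix_symmQuartic_eq (l m n y₁ y₂ : ℝ) :
    hessianMatrix (binaryQuartic l m n m l) y₁ y₂ =
      star !![1 / 2, 1 / 2; 1 / 2, -1 / 2] *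
        hessianMatrix (binaryQuartic (2 * l + 2 * m + n) 0 (12 * l - 2 * n) 0 (2 * l - 2 * m + n))
          ((y₁ + y₂) / 2) ((y₁ - y₂) / 2) * !![1 / 2, 1 / 2; 1 / 2, -1 / 2] := by
  rw [hessianMatrix_binaryQuartic, hessianMatrix_binaryQuartic]
  ext i j
  fin_cases i <;> fin_cases j <;>
    simp only [mul_apply, Fin.sum_univ_two, star_apply, star_trivial, of_apply, cons_val',
      cons_val_zero, cons_val_one, cons_val_fin_one, Fin.isValue, Fin.zero_eta, Fin.mk_one] <;> ring

theorem forall_posDef_hessianMatrix_symmQuartic_iff (l m n : ℝ) :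
    (∀ y₁ y₂ : ℝ, (y₁, y₂) ≠ (0, 0) → (hessianMatrix (binaryQuartic l m n m l) y₁ y₂).PosDef) ↔
      ∀ x y : ℝ, (x, y) ≠ (0, 0) → (hessianMatrix
        (binaryQuartic (2 * l + 2 * m + n) 0 (12 * l - 2 * n) 0 (2 * l - 2 * m + n)) x y).PosDef := by
  have hU : IsUnit !![(1 / 2 : ℝ), 1 / 2; 1 / 2, -1 / 2] := by
    rw [isUnit_iff_isUnit_det, det_fin_two_of]
    norm_num
  simp_rw [hessianMatrix_symmQuartic_eq, hU.posDef_star_left_conjugate_iff]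
  constructor
  · intro h x y hxy
    have hsd : (x + y, x - y) ≠ (0, 0) := by
      contrapose! hxy
      simp only [Prod.mk.injEq] at hxy ⊢
      constructor <;> linarith
    convert h (x + y) (x - y) hsd using 2 <;> ring
  · intro h y₁ y₂ hy
    refine h _ _ ?_
    contrapose! hy
    simp only [Prod.mk.injEq] at hy ⊢
    constructor <;> linarith

lemma rotatedCoeffs_conditions_iff (l m n : ℝ) :
    (0 < 2 * l + 2 * m + n ∧ 0 < 2 * l - 2 * m + n ∧ 0 < 12 * l - 2 * n ∧
        (12 * l - 2 * n) ^ 2 < 36 * (2 * l + 2 * m + n) * (2 * l - 2 * m + n)) ↔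
      (3 / 2) * √(4 * l ^ 2 + 2 * m ^ 2) - 3 * l < n ∧ n < 6 * l := by
  constructor
  · rintro ⟨hα, hβ, hγ, hdisc⟩
    refine ⟨?_, by linarith⟩
    have hsqrt : √(4 * l ^ 2 + 2 * m ^ 2) < 2 / 3 * (n + 3 * l) :=
      (Real.sqrt_lt' (by linarith)).2 (by nlinarith)
    linarith
  · rintro ⟨hsqrt, h6⟩
    have hn3 : 0 < n + 3 * l := by linarith [Real.sqrt_nonneg (4 * l ^ 2 + 2 * m ^ 2)]
    have hsq : 4 * l ^ 2 + 2 * m ^ 2 < (2 / 3 * (n + 3 * l)) ^ 2 :=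
      (Real.sqrt_lt' (by linarith)).1 (by linarith)
    have hdisc : (12 * l - 2 * n) ^ 2 < 36 * (2 * l + 2 * m + n) * (2 * l - 2 * m + n) := by
      nlinarith
    have hn : 0 < n := by nlinarith [sq_nonneg m]
    have hαβ : 0 < (2 * l + 2 * m + n) * (2 * l - 2 * m + n) := by
      nlinarith [sq_nonneg (6 * l - n)]
    have hα : 0 < 2 * l + 2 * m + n := by nlinarith
    have hβ : 0 < 2 * l - 2 * m + n := by nlinarith
    exact ⟨hα, hβ, by linarith, hdisc⟩

theorem stmt_11 (l m n : ℝ) (A : ℝ → ℝ → ℝ)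
    (hA : A = fun y₁ y₂ =>
      l * (y₁ ^ 4 + y₂ ^ 4) + m * (y₁ ^ 3 * y₂ + y₁ * y₂ ^ 3) + n * y₁ ^ 2 * y₂ ^ 2) :
    (∀ y₁ y₂ : ℝ, (y₁, y₂) ≠ (0, 0) →
        (!![pd1 (pd1 A) y₁ y₂, pd1 (pd2 A) y₁ y₂;
            pd2 (pd1 A) y₁ y₂, pd2 (pd2 A) y₁ y₂] : Matrix (Fin 2) (Fin 2) ℝ).PosDef) ↔
      ((3 / 2) * Real.sqrt (4 * l ^ 2 + 2 * m ^ 2) - 3 * l < n ∧ n < 6 * l) := by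
  have hA' : A = binaryQuartic l m n m l := by
    rw [hA]; ext y₁ y₂; unfold binaryQuartic; ring
  subst hA'
  exact (forall_posDef_hessianMatrix_symmQuartic_iff l m n).trans
    ((forall_posDef_hessianMatrix_evenQuartic_iff _ _ _).trans (rotatedCoeffs_conditions_iff l m n))
end

section
/- The palindromic polynomial (5/4)t⁴ + √19 t³ + (13/2)t² + √19 t + 5/4 is strictly positive for all real t. -/
theorem stmt_14 (t : ℝ) :
    0 < (5 / 4) * t ^ 4 + Real.sqrt 19 * t ^ 3 + (13 / 2) * t ^ 2 + Real.sqrt 19 * t + 5 / 4 := by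
  have hs : Real.sqrt 19 ^ 2 = 19 := Real.sq_sqrt (by norm_num)
  have key : (5 / 4) * t ^ 4 + Real.sqrt 19 * t ^ 3 + (13 / 2) * t ^ 2 + Real.sqrt 19 * t + 5 / 4
      = 5 / 4 * (t ^ 2 + (2 * Real.sqrt 19 / 5) * t + 1) ^ 2 + (1 / 5) * t ^ 2 := by
    linear_combination (-(t ^ 2) / 5) * hs
  rw [key]
  rcases eq_or_ne t 0 with h | h
  · simp [h]
  · have ht : 0 < t ^ 2 := by positivity
    nlinarith [sq_nonneg (t ^ 2 + (2 * Real.sqrt 19 / 5) * t + 1)]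
end

section
/- Let l, m, n, q ∈ ℝ. The ternary quadratic form with matrix [[12l, 3m, 3m], [3m, 2n, q], [3m, q, 2n]] is positive definite if and only if l > 0 and (3m² - 4ln)/(2l) < q < 2n. -/
/-!
In the coordinates `x₀`, `s = x₁ + x₂`, `t = x₁ - x₂` the quadratic form of a symmetric
`3 × 3` matrix `!![a, b, b; b, c, d; b, d, c]` splits as the binary form
`a x₀² + 2b x₀ s + (c + d)/2 · s²` plus `(c - d)/2 · t²`. Completing the square shows that
a binary form `a x² + 2bxy + e y²` is positive definite iff `a > 0` and `ae - b² > 0`, so the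
matrix is positive definite iff `a > 0`, `a(c + d) - 2b² > 0` and `d < c`. With
`a = 12l`, `b = 3m`, `c = 2n`, `d = q` these are the stated conditions.
-/

open Matrix

theorem binary_quadratic_pos_iff {a b e : ℝ} :
    (∀ x y : ℝ, x ≠ 0 ∨ y ≠ 0 → 0 < a * x ^ 2 + 2 * b * x * y + e * y ^ 2) ↔
      0 < a ∧ 0 < a * e - b ^ 2 := by
  constructor
  · intro h
    have ha : 0 < a := by simpa using h 1 0 (by simp)
    refine ⟨ha, pos_of_mul_pos_right (a := a) ?_ ha.le⟩
    have := h (-b) a (.inr ha.ne')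
    linarith
  · rintro ⟨ha, hdisc⟩ x y hxy
    have key : a * (a * x ^ 2 + 2 * b * x * y + e * y ^ 2) =
        (a * x + b * y) ^ 2 + (a * e - b ^ 2) * y ^ 2 := by ring
    refine pos_of_mul_pos_right (a := a) ?_ ha.le
    rw [key]
    rcases eq_or_ne y 0 with rfl | hy
    · have hx : x ≠ 0 := by simpa using hxy
      simp only [mul_zero, add_zero, ne_eq, OfNat.ofNat_ne_zero, not_false_eq_true, zero_pow]
      positivity
    · have := mul_pos hdisc (by positivity : 0 < y ^ 2)
      positivity

theorem dotProduct_mulVec_swapSymmetric (a b c d : ℝ) (x : Fin 3 → ℝ) :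
    star x ⬝ᵥ (!![a, b, b; b, c, d; b, d, c] *ᵥ x) =
      a * x 0 ^ 2 + 2 * b * x 0 * (x 1 + x 2) + (c + d) / 2 * (x 1 + x 2) ^ 2
        + (c - d) / 2 * (x 1 - x 2) ^ 2 := by
  simp only [dotProduct, Pi.star_apply, star_trivial, mulVec, of_apply, cons_val',
    cons_val_fin_one, Fin.sum_univ_three, Fin.isValue, cons_val_zero, cons_val_one, cons_val]
  ring

theorem posDef_swapSymmetric_iff (a b c d : ℝ) :
    (!![a, b, b; b, c, d; b, d, c] : Matrix (Fin 3) (Fin 3) ℝ).PosDef ↔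
      0 < a ∧ 0 < a * (c + d) - 2 * b ^ 2 ∧ d < c := by
  have herm : (!![a, b, b; b, c, d; b, d, c] : Matrix (Fin 3) (Fin 3) ℝ).IsHermitian := by
    ext i j; fin_cases i <;> fin_cases j <;> rfl
  have hdisc : 0 < a * (c + d) - 2 * b ^ 2 ↔ 0 < a * ((c + d) / 2) - b ^ 2 := by
    constructor <;> intro h <;> linarith
  rw [posDef_iff_dotProduct_mulVec, and_iff_right herm, hdisc, ← and_assoc,
    ← binary_quadratic_pos_iff]
  simp only [dotProduct_mulVec_swapSymmetric]
  constructor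
  · intro h
    refine ⟨fun x y hxy ↦ ?_, ?_⟩
    · have := @h ![x, y / 2, y / 2] (by
        rcases hxy with hx | hy
        · exact fun h0 ↦ hx (by simpa using congrFun h0 0)
        · exact fun h0 ↦ hy (by simpa using congrFun h0 1))
      simpa using this
    · have := @h ![0, 1, -1] (fun h0 ↦ by simpa using congrFun h0 1)
      simp [Matrix.cons_val] at this
      linarith
  · rintro ⟨hB, hcd⟩ x hx
    by_cases h0 : x 0 = 0 ∧ x 1 + x 2 = 0
    · have ht : x 1 - x 2 ≠ 0 := fun ht ↦ hx <| funext fun i ↦ by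
        fin_cases i <;> simp <;> linarith [h0.1, h0.2]
      rw [h0.1, h0.2]
      have := mul_pos (half_pos (sub_pos.2 hcd)) (by positivity : 0 < (x 1 - x 2) ^ 2)
      simpa using this
    · have := hB (x 0) (x 1 + x 2) (not_and_or.1 h0)
      have := mul_nonneg (half_pos (sub_pos.2 hcd)).le (sq_nonneg (x 1 - x 2))
      linarith

theorem stmt_17 (l m n q : ℝ) :
    (!![12 * l, 3 * m, 3 * m;
        3 * m, 2 * n, q;
        3 * m, q, 2 * n] : Matrix (Fin 3) (Fin 3) ℝ).PosDef ↔
      (0 < l ∧ (3 * m ^ 2 - 4 * l * n) / (2 * l) < q ∧ q < 2 * n) := by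
  rw [posDef_swapSymmetric_iff]
  constructor
  · rintro ⟨hl, hdisc, hq⟩
    have hl : 0 < l := by linarith
    refine ⟨hl, ?_, hq⟩
    rw [div_lt_iff₀ (by positivity)]
    linarith
  · rintro ⟨hl, hdisc, hq⟩
    rw [div_lt_iff₀ (by positivity)] at hdisc
    exact ⟨by positivity, by linarith, hq⟩
end

section
/- For all y₁, y₂, y₃ ∈ ℝ, the determinant of the Hessian of A(y) = (y₁⁴+y₂⁴+y₃⁴) + 2(y₁³y₂+y₁³y₃+y₂³y₁+y₂³y₃+y₃³y₁+y₃³y₂) + 3(y₁²y₂²+y₁²y₃²+y₂²y₃²) + 4(y₁²y₂y₃+y₁y₂²y₃+y₁y₂y₃²) equals 96(y₁² + y₂² + y₃² + y₁y₂ + y₁y₃ + y₂y₃)³. -/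
noncomputable def qd1 (f : ℝ → ℝ → ℝ → ℝ) : ℝ → ℝ → ℝ → ℝ :=
  fun x y z => deriv (fun t => f t y z) x
noncomputable def qd2 (f : ℝ → ℝ → ℝ → ℝ) : ℝ → ℝ → ℝ → ℝ :=
  fun x y z => deriv (fun t => f x t z) y
noncomputable def qd3 (f : ℝ → ℝ → ℝ → ℝ) : ℝ → ℝ → ℝ → ℝ :=
  fun x y z => deriv (fun t => f x y t) z

/-! `A` is symmetric, so every partial derivative of `A` is `∂₁A` with its arguments permuted,
and `∂₁A` is symmetric in its last two arguments. Hence two second partials, `∂₁∂₁A` and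
`∂₂∂₁A`, determine the whole Hessian, and its determinant is a polynomial identity. -/

theorem deriv_eq_of_eq_quartic {f : ℝ → ℝ} (a b c d e : ℝ)
    (hf : ∀ t, f t = a * t ^ 4 + b * t ^ 3 + c * t ^ 2 + d * t + e) (x : ℝ) :
    deriv f x = 4 * a * x ^ 3 + 3 * b * x ^ 2 + 2 * c * x + d := by
  rw [funext hf]
  have h := (((((hasDerivAt_pow 4 x).const_mul a).add ((hasDerivAt_pow 3 x).const_mul b)).add
    ((hasDerivAt_pow 2 x).const_mul c)).add ((hasDerivAt_id' x).const_mul d)).add_const e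
  exact h.deriv.trans (by norm_num; ring)

def quarticA (y₁ y₂ y₃ : ℝ) : ℝ :=
  (y₁ ^ 4 + y₂ ^ 4 + y₃ ^ 4) +
    2 * (y₁ ^ 3 * y₂ + y₁ ^ 3 * y₃ + y₂ ^ 3 * y₁ + y₂ ^ 3 * y₃ + y₃ ^ 3 * y₁ + y₃ ^ 3 * y₂) +
    3 * (y₁ ^ 2 * y₂ ^ 2 + y₁ ^ 2 * y₃ ^ 2 + y₂ ^ 2 * y₃ ^ 2) +
    4 * (y₁ ^ 2 * y₂ * y₃ + y₁ * y₂ ^ 2 * y₃ + y₁ * y₂ * y₃ ^ 2)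

def partialA₁ (x y z : ℝ) : ℝ :=
  4 * x ^ 3 + 6 * x ^ 2 * (y + z) + 2 * x * (3 * y ^ 2 + 3 * z ^ 2 + 4 * y * z) +
    2 * y ^ 3 + 2 * z ^ 3 + 4 * y ^ 2 * z + 4 * y * z ^ 2

def partialA₁₁ (x y z : ℝ) : ℝ :=
  12 * x ^ 2 + 12 * x * (y + z) + 6 * y ^ 2 + 6 * z ^ 2 + 8 * y * z

def partialA₁₂ (x y z : ℝ) : ℝ :=
  6 * x ^ 2 + 6 * y ^ 2 + 12 * x * y + 8 * x * z + 8 * y * z + 4 * z ^ 2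

theorem quarticA_swap (x y z : ℝ) : quarticA y x z = quarticA x y z := by
  unfold quarticA; ring

theorem quarticA_rotate (x y z : ℝ) : quarticA y z x = quarticA x y z := by
  unfold quarticA; ring

theorem partialA₁_swap (x y z : ℝ) : partialA₁ x z y = partialA₁ x y z := by
  unfold partialA₁; ring

theorem deriv_quarticA_fst (x y z : ℝ) : deriv (fun t => quarticA t y z) x = partialA₁ x y z := by
  rw [deriv_eq_of_eq_quartic 1 (2 * (y + z)) (3 * y ^ 2 + 3 * z ^ 2 + 4 * y * z)
    (2 * y ^ 3 + 2 * z ^ 3 + 4 * y ^ 2 * z + 4 * y * z ^ 2)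
    (y ^ 4 + z ^ 4 + 2 * y ^ 3 * z + 2 * y * z ^ 3 + 3 * y ^ 2 * z ^ 2)
    (fun t => by unfold quarticA; ring)]
  unfold partialA₁; ring

theorem deriv_quarticA_snd (x y z : ℝ) : deriv (fun t => quarticA x t z) y = partialA₁ y x z := by
  simp only [quarticA_swap _ x z, deriv_quarticA_fst]

theorem deriv_quarticA_thd (x y z : ℝ) : deriv (fun t => quarticA x y t) z = partialA₁ z x y := by
  simp only [quarticA_rotate _ x y, deriv_quarticA_fst]

theorem deriv_partialA₁_fst (x y z : ℝ) :
    deriv (fun t => partialA₁ t y z) x = partialA₁₁ x y z := by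
  rw [deriv_eq_of_eq_quartic 0 4 (6 * (y + z)) (6 * y ^ 2 + 6 * z ^ 2 + 8 * y * z)
    (2 * y ^ 3 + 2 * z ^ 3 + 4 * y ^ 2 * z + 4 * y * z ^ 2) (fun t => by unfold partialA₁; ring)]
  unfold partialA₁₁; ring

theorem deriv_partialA₁_snd (x y z : ℝ) :
    deriv (fun t => partialA₁ x t z) y = partialA₁₂ x y z := by
  rw [deriv_eq_of_eq_quartic 0 2 (6 * x + 4 * z) (6 * x ^ 2 + 8 * x * z + 4 * z ^ 2)
    (4 * x ^ 3 + 6 * x ^ 2 * z + 6 * x * z ^ 2 + 2 * z ^ 3) (fun t => by unfold partialA₁; ring)]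
  unfold partialA₁₂; ring

theorem deriv_partialA₁_thd (x y z : ℝ) :
    deriv (fun t => partialA₁ x y t) z = partialA₁₂ x z y := by
  simp only [partialA₁_swap x _ y, deriv_partialA₁_snd]

theorem stmt_18 (A : ℝ → ℝ → ℝ → ℝ)
    (hA : A = fun y₁ y₂ y₃ =>
      (y₁ ^ 4 + y₂ ^ 4 + y₃ ^ 4) +
        2 * (y₁ ^ 3 * y₂ + y₁ ^ 3 * y₃ + y₂ ^ 3 * y₁ + y₂ ^ 3 * y₃ + y₃ ^ 3 * y₁ + y₃ ^ 3 * y₂) +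
        3 * (y₁ ^ 2 * y₂ ^ 2 + y₁ ^ 2 * y₃ ^ 2 + y₂ ^ 2 * y₃ ^ 2) +
        4 * (y₁ ^ 2 * y₂ * y₃ + y₁ * y₂ ^ 2 * y₃ + y₁ * y₂ * y₃ ^ 2)) :
    ∀ y₁ y₂ y₃ : ℝ,
      (!![qd1 (qd1 A) y₁ y₂ y₃, qd1 (qd2 A) y₁ y₂ y₃, qd1 (qd3 A) y₁ y₂ y₃;
          qd2 (qd1 A) y₁ y₂ y₃, qd2 (qd2 A) y₁ y₂ y₃, qd2 (qd3 A) y₁ y₂ y₃;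
          qd3 (qd1 A) y₁ y₂ y₃, qd3 (qd2 A) y₁ y₂ y₃, qd3 (qd3 A) y₁ y₂ y₃] :
          Matrix (Fin 3) (Fin 3) ℝ).det =
        96 * (y₁ ^ 2 + y₂ ^ 2 + y₃ ^ 2 + y₁ * y₂ + y₁ * y₃ + y₂ * y₃) ^ 3 := by
  obtain rfl : A = quarticA := hA
  intro y₁ y₂ y₃
  simp only [qd1, qd2, qd3, deriv_quarticA_fst, deriv_quarticA_snd, deriv_quarticA_thd,
    deriv_partialA₁_fst, deriv_partialA₁_snd, deriv_partialA₁_thd]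
  rw [Matrix.det_fin_three]
  simp only [partialA₁₁, partialA₁₂, Matrix.of_apply, Matrix.cons_val', Matrix.cons_val_zero,
    Matrix.cons_val_fin_one, Matrix.cons_val_one, Matrix.cons_val]
  ring
end

section
/- The Hessian of A(y) = (y₁⁴+y₂⁴+y₃⁴) + 2∑_{i≠j} y_i³y_j + 3∑_{i<j} y_i²y_j² + 4(y₁²y₂y₃+y₁y₂²y₃+y₁y₂y₃²) is positive definite at every (y₁,y₂,y₃) ≠ (0,0,0). -/
open Matrix

def quad (a b c : ℝ) : ℝ := a ^ 2 + b ^ 2 + c ^ 2 + a * b + a * c + b * c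

def quadGrad (a b c : ℝ) : Fin 3 → ℝ := ![2 * a + b + c, a + 2 * b + c, a + b + 2 * c]

def quadHess : Matrix (Fin 3) (Fin 3) ℝ := !![2, 1, 1; 1, 2, 1; 1, 1, 2]

lemma quad_pos {a b c : ℝ} (h : (a, b, c) ≠ (0, 0, 0)) : 0 < quad a b c := by
  have hsum : quad a b c = ((a + b) ^ 2 + (a + c) ^ 2 + (b + c) ^ 2) / 2 := by
    unfold quad; ring
  rw [hsum]
  by_contra! hle
  have hab : a + b = 0 := by nlinarith [sq_nonneg (a + b), sq_nonneg (a + c), sq_nonneg (b + c)]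
  have hac : a + c = 0 := by nlinarith [sq_nonneg (a + b), sq_nonneg (a + c), sq_nonneg (b + c)]
  have hbc : b + c = 0 := by nlinarith [sq_nonneg (a + b), sq_nonneg (a + c), sq_nonneg (b + c)]
  exact h (by simp only [Prod.mk.injEq]; refine ⟨?_, ?_, ?_⟩ <;> linarith)

lemma posDef_quadHess : quadHess.PosDef := by
  refine .of_dotProduct_mulVec_pos ?_ fun x hx => ?_
  · ext i j
    fin_cases i <;> fin_cases j <;> rfl
  · have hform : star x ⬝ᵥ quadHess *ᵥ x = 2 * quad (x 0) (x 1) (x 2) := by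
      simp [quadHess, quad, dotProduct, mulVec, Fin.sum_univ_three]
      ring
    rw [hform]
    refine mul_pos two_pos (quad_pos fun h => hx ?_)
    simp only [Prod.mk.injEq] at h
    ext i
    fin_cases i <;> simp [h]

lemma hasDerivAt_sq_add_mul_add (p q x : ℝ) :
    HasDerivAt (fun t => t ^ 2 + p * t + q) (2 * x + p) x :=
  (((hasDerivAt_pow 2 x).add ((hasDerivAt_id' x).const_mul p)).add_const q).congr_deriv
    (by norm_num)

lemma hasDerivAt_quad_fst (a b c : ℝ) :
    HasDerivAt (fun t => quad t b c) (quadGrad a b c 0) a := by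
  have h : (fun t => quad t b c) = fun t => t ^ 2 + (b + c) * t + quad 0 b c := by
    funext t; unfold quad; ring
  rw [h]
  exact (hasDerivAt_sq_add_mul_add _ _ a).congr_deriv (by simp [quadGrad]; ring)

lemma hasDerivAt_quad_snd (a b c : ℝ) :
    HasDerivAt (fun t => quad a t c) (quadGrad a b c 1) b := by
  have h : (fun t => quad a t c) = fun t => t ^ 2 + (a + c) * t + quad a 0 c := by
    funext t; unfold quad; ring
  rw [h]
  exact (hasDerivAt_sq_add_mul_add _ _ b).congr_deriv (by simp [quadGrad]; ring)

lemma hasDerivAt_quad_thd (a b c : ℝ) :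
    HasDerivAt (fun t => quad a b t) (quadGrad a b c 2) c := by
  have h : (fun t => quad a b t) = fun t => t ^ 2 + (a + b) * t + quad a b 0 := by
    funext t; unfold quad; ring
  rw [h]
  exact (hasDerivAt_sq_add_mul_add _ _ c).congr_deriv (by simp [quadGrad]; ring)

lemma hasDerivAt_quadGrad_fst (a b c : ℝ) (i : Fin 3) :
    HasDerivAt (fun t => quadGrad t b c i) (quadHess 0 i) a := by
  have h : (fun t => quadGrad t b c i) = fun t => quadHess 0 i * t + quadGrad 0 b c i := by
    funext t; fin_cases i <;> simp [quadGrad, quadHess] <;> ring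
  rw [h]
  exact (((hasDerivAt_id' a).const_mul _).add_const _).congr_deriv (mul_one _)

lemma hasDerivAt_quadGrad_snd (a b c : ℝ) (i : Fin 3) :
    HasDerivAt (fun t => quadGrad a t c i) (quadHess 1 i) b := by
  have h : (fun t => quadGrad a t c i) = fun t => quadHess 1 i * t + quadGrad a 0 c i := by
    funext t; fin_cases i <;> simp [quadGrad, quadHess] <;> ring
  rw [h]
  exact (((hasDerivAt_id' b).const_mul _).add_const _).congr_deriv (mul_one _)

lemma hasDerivAt_quadGrad_thd (a b c : ℝ) (i : Fin 3) :
    HasDerivAt (fun t => quadGrad a b t i) (quadHess 2 i) c := by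
  have h : (fun t => quadGrad a b t i) = fun t => quadHess 2 i * t + quadGrad a b 0 i := by
    funext t; fin_cases i <;> simp [quadGrad, quadHess] <;> ring
  rw [h]
  exact (((hasDerivAt_id' c).const_mul _).add_const _).congr_deriv (mul_one _)

lemma qd1_eq_of_hasDerivAt {f g : ℝ → ℝ → ℝ → ℝ}
    (h : ∀ x y z, HasDerivAt (fun t => f t y z) (g x y z) x) : qd1 f = g :=
  funext fun x => funext fun y => funext fun z => (h x y z).deriv

lemma qd2_eq_of_hasDerivAt {f g : ℝ → ℝ → ℝ → ℝ}
    (h : ∀ x y z, HasDerivAt (fun t => f x t z) (g x y z) y) : qd2 f = g :=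
  funext fun x => funext fun y => funext fun z => (h x y z).deriv

lemma qd3_eq_of_hasDerivAt {f g : ℝ → ℝ → ℝ → ℝ}
    (h : ∀ x y z, HasDerivAt (fun t => f x y t) (g x y z) z) : qd3 f = g :=
  funext fun x => funext fun y => funext fun z => (h x y z).deriv

lemma qd1_quad_sq :
    qd1 (fun a b c => quad a b c ^ 2) = fun a b c => 2 * quad a b c * quadGrad a b c 0 :=
  qd1_eq_of_hasDerivAt fun a b c => ((hasDerivAt_quad_fst a b c).pow 2).congr_deriv (by norm_num)

lemma qd2_quad_sq :
    qd2 (fun a b c => quad a b c ^ 2) = fun a b c => 2 * quad a b c * quadGrad a b c 1 :=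
  qd2_eq_of_hasDerivAt fun a b c => ((hasDerivAt_quad_snd a b c).pow 2).congr_deriv (by norm_num)

lemma qd3_quad_sq :
    qd3 (fun a b c => quad a b c ^ 2) = fun a b c => 2 * quad a b c * quadGrad a b c 2 :=
  qd3_eq_of_hasDerivAt fun a b c => ((hasDerivAt_quad_thd a b c).pow 2).congr_deriv (by norm_num)

lemma qd1_two_mul_quad_mul_quadGrad (i : Fin 3) :
    qd1 (fun a b c => 2 * quad a b c * quadGrad a b c i) = fun a b c =>
      2 * (quadGrad a b c 0 * quadGrad a b c i + quad a b c * quadHess 0 i) :=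
  qd1_eq_of_hasDerivAt fun a b c =>
    (((hasDerivAt_quad_fst a b c).const_mul 2).mul (hasDerivAt_quadGrad_fst a b c i)).congr_deriv
      (by ring)

lemma qd2_two_mul_quad_mul_quadGrad (i : Fin 3) :
    qd2 (fun a b c => 2 * quad a b c * quadGrad a b c i) = fun a b c =>
      2 * (quadGrad a b c 1 * quadGrad a b c i + quad a b c * quadHess 1 i) :=
  qd2_eq_of_hasDerivAt fun a b c =>
    (((hasDerivAt_quad_snd a b c).const_mul 2).mul (hasDerivAt_quadGrad_snd a b c i)).congr_deriv
      (by ring)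

lemma qd3_two_mul_quad_mul_quadGrad (i : Fin 3) :
    qd3 (fun a b c => 2 * quad a b c * quadGrad a b c i) = fun a b c =>
      2 * (quadGrad a b c 2 * quadGrad a b c i + quad a b c * quadHess 2 i) :=
  qd3_eq_of_hasDerivAt fun a b c =>
    (((hasDerivAt_quad_thd a b c).const_mul 2).mul (hasDerivAt_quadGrad_thd a b c i)).congr_deriv
      (by ring)

lemma hessian_quad_sq (a b c : ℝ) :
    let f := fun a b c => quad a b c ^ 2
    (!![qd1 (qd1 f) a b c, qd1 (qd2 f) a b c, qd1 (qd3 f) a b c;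
        qd2 (qd1 f) a b c, qd2 (qd2 f) a b c, qd2 (qd3 f) a b c;
        qd3 (qd1 f) a b c, qd3 (qd2 f) a b c, qd3 (qd3 f) a b c] : Matrix (Fin 3) (Fin 3) ℝ) =
      (2 * quad a b c) • quadHess + (2 : ℝ) • vecMulVec (quadGrad a b c) (quadGrad a b c) := by
  simp only [qd1_quad_sq, qd2_quad_sq, qd3_quad_sq, qd1_two_mul_quad_mul_quadGrad,
    qd2_two_mul_quad_mul_quadGrad, qd3_two_mul_quad_mul_quadGrad]
  ext i j
  fin_cases i <;> fin_cases j <;> simp [vecMulVec] <;> ring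

theorem stmt_19 (A : ℝ → ℝ → ℝ → ℝ)
    (hA : A = fun y₁ y₂ y₃ =>
      (y₁ ^ 4 + y₂ ^ 4 + y₃ ^ 4) +
        2 * (y₁ ^ 3 * y₂ + y₁ ^ 3 * y₃ + y₂ ^ 3 * y₁ + y₂ ^ 3 * y₃ + y₃ ^ 3 * y₁ + y₃ ^ 3 * y₂) +
        3 * (y₁ ^ 2 * y₂ ^ 2 + y₁ ^ 2 * y₃ ^ 2 + y₂ ^ 2 * y₃ ^ 2) +
        4 * (y₁ ^ 2 * y₂ * y₃ + y₁ * y₂ ^ 2 * y₃ + y₁ * y₂ * y₃ ^ 2)) :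
    ∀ y₁ y₂ y₃ : ℝ, (y₁, y₂, y₃) ≠ (0, 0, 0) →
      (!![qd1 (qd1 A) y₁ y₂ y₃, qd1 (qd2 A) y₁ y₂ y₃, qd1 (qd3 A) y₁ y₂ y₃;
          qd2 (qd1 A) y₁ y₂ y₃, qd2 (qd2 A) y₁ y₂ y₃, qd2 (qd3 A) y₁ y₂ y₃;
          qd3 (qd1 A) y₁ y₂ y₃, qd3 (qd2 A) y₁ y₂ y₃, qd3 (qd3 A) y₁ y₂ y₃] :
          Matrix (Fin 3) (Fin 3) ℝ).PosDef := by
  intro y₁ y₂ y₃ hy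
  have hA_sq : A = fun a b c => quad a b c ^ 2 := by
    rw [hA]; funext a b c; unfold quad; ring
  rw [hA_sq, hessian_quad_sq]
  have hrank_one : (vecMulVec (quadGrad y₁ y₂ y₃) (quadGrad y₁ y₂ y₃)).PosSemidef := by
    simpa using posSemidef_vecMulVec_self_star (quadGrad y₁ y₂ y₃)
  exact (posDef_quadHess.smul (mul_pos two_pos (quad_pos hy))).add_posSemidef
    (hrank_one.smul zero_le_two)
end
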